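/- Let m₁, m₂ > 0, and let μ_{m₁,m₂} be the Borel probability measure on [0,1]² with density (u,v) ↦ m₁ m₂ u^{m₁−1} v^{m₂−1} with respect to Lebesgue measure (the law of independent random variables U and V with cumulative distribution functions u^{m₁} and v^{m₂} respectively). Then μ_{m₁,m₂} is a tail generating measure, and for every bivariate copula C admitting a tail dependence function Λ, λ_{μ_{m₁,m₂}}(C) = ((m₁+1)(m₂+1)/(m₁+m₂+2)) · ∫₀¹ { Λ(t,1)·t^{m₁−1} + Λ(1,t)·t^{m₂−1} } dt. In particular, for m₁ = m₂ = 1 (μ the uniform measure on [0,1]², giving tail Spearman's rho λ_S), λ_S(C) = ∫₀¹ (Λ(t,1) + Λ(1,t)) dt. -/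

import Mathlib

/-!
The tail dependence function `Λ` of a copula is positively homogeneous of degree one and,
like the copula, 1-Lipschitz in each variable, hence continuous. For any such kernel `K`,
split `[0,1]²` along its (null) diagonal. On `{v < u}` write `K(u,v) = u K(1, v/u)`; the
substitution `v = u t` turns the integral against `m₁ m₂ u^(m₁-1) v^(m₂-1)` into
`m₁ m₂ ∫₀¹ u^(m₁+m₂) du · ∫₀¹ K(1,t) t^(m₂-1) dt`, and `{u < v}` is the mirror image.
Taking `K = Λ` and `K = min` (for which `∫₀¹ (t^m₁ + t^m₂) dt = 1/(m₁+1) + 1/(m₂+1)`),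
the common factor `m₁ m₂ / (m₁ + m₂ + 1)` cancels in the ratio.
-/

open MeasureTheory Filter Set

/-- A bivariate copula: `C : [0,1]² → [0,1]` with the grounded/marginal conditions and
the 2-increasing property. -/
def IsCopula (C : ℝ → ℝ → ℝ) : Prop :=
  (∀ u ∈ Icc (0:ℝ) 1, ∀ v ∈ Icc (0:ℝ) 1, C u v ∈ Icc (0:ℝ) 1) ∧
  (∀ u ∈ Icc (0:ℝ) 1, C u 0 = 0 ∧ C 0 u = 0 ∧ C u 1 = u ∧ C 1 u = u) ∧
  (∀ u u' v v' : ℝ, u ∈ Icc (0:ℝ) 1 → u' ∈ Icc (0:ℝ) 1 →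
    v ∈ Icc (0:ℝ) 1 → v' ∈ Icc (0:ℝ) 1 → u ≤ u' → v ≤ v' →
    0 ≤ C u' v' - C u' v - C u v' + C u v)

/-- `Λ` is the tail dependence function of `C`:
`Λ(u,v) = lim_{p↓0} C(pu,pv)/p` for every `(u,v) ∈ [0,∞)²`. -/
def HasTDF (C Λ : ℝ → ℝ → ℝ) : Prop :=
  ∀ u v : ℝ, 0 ≤ u → 0 ≤ v →
    Tendsto (fun p : ℝ => C (p * u) (p * v) / p)
      (nhdsWithin (0:ℝ) (Ioi 0)) (nhds (Λ u v))

/-- A tail generating measure: a Borel probability measure on `[0,1]²` whose mass is not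
concentrated on `{u = 0} ∪ {v = 0}`. -/
def IsTailGenMeasure (μ : Measure (ℝ × ℝ)) : Prop :=
  IsProbabilityMeasure μ ∧
  μ ((Icc (0:ℝ) 1 ×ˢ Icc (0:ℝ) 1)ᶜ) = 0 ∧
  μ {q : ℝ × ℝ | q.1 = 0 ∨ q.2 = 0} < 1

/-- The μ-tail dependence measure: `λ_μ = (∫ Λ dμ) / (∫ min dμ)`, applied to
the tail dependence function `Λ` of the copula. -/
noncomputable def tdm (Λ : ℝ → ℝ → ℝ) (μ : Measure (ℝ × ℝ)) : ℝ :=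
  (∫ q, Λ q.1 q.2 ∂μ) / (∫ q : ℝ × ℝ, min q.1 q.2 ∂μ)

/-- The law of `(U,V)` with independent components, `U ~ Mo(m₁)`, `V ~ Mo(m₂)`:
the measure on `[0,1]²` with density `m₁ m₂ u^(m₁-1) v^(m₂-1)` w.r.t. Lebesgue measure. -/
noncomputable def polyMeasure (m₁ m₂ : ℝ) : Measure (ℝ × ℝ) :=
  (((volume : Measure ℝ).restrict (Icc 0 1)).prod
      ((volume : Measure ℝ).restrict (Icc 0 1))).withDensity
    (fun q => ENNReal.ofReal (m₁ * m₂ * q.1 ^ (m₁ - 1) * q.2 ^ (m₂ - 1)))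

open scoped Topology

namespace IsCopula

variable {C : ℝ → ℝ → ℝ} (hC : IsCopula C) {x x' y y' : ℝ}
include hC

lemma sub_left_mem_Icc (hx : x ∈ Icc (0:ℝ) 1) (hx' : x' ∈ Icc (0:ℝ) 1)
    (hy : y ∈ Icc (0:ℝ) 1) (h : x ≤ x') : C x' y - C x y ∈ Icc 0 (x' - x) := by
  have h0 := hC.2.2 x x' 0 y hx hx' (left_mem_Icc.2 zero_le_one) hy h hy.1
  have h1 := hC.2.2 x x' y 1 hx hx' hy (right_mem_Icc.2 zero_le_one) h hy.2
  have := hC.2.1 x hx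
  have := hC.2.1 x' hx'
  constructor <;> linarith

lemma sub_right_mem_Icc (hx : x ∈ Icc (0:ℝ) 1) (hy : y ∈ Icc (0:ℝ) 1)
    (hy' : y' ∈ Icc (0:ℝ) 1) (h : y ≤ y') : C x y' - C x y ∈ Icc 0 (y' - y) := by
  have h0 := hC.2.2 0 x y y' (left_mem_Icc.2 zero_le_one) hx hy hy' hx.1 h
  have h1 := hC.2.2 x 1 y y' hx (right_mem_Icc.2 zero_le_one) hy hy' hx.2 h
  have := hC.2.1 y hy
  have := hC.2.1 y' hy'
  constructor <;> linarith

lemma abs_sub_le_left (hx : x ∈ Icc (0:ℝ) 1) (hx' : x' ∈ Icc (0:ℝ) 1)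
    (hy : y ∈ Icc (0:ℝ) 1) : |C x y - C x' y| ≤ |x - x'| := by
  rcases le_total x x' with h | h
  · have := hC.sub_left_mem_Icc hx hx' hy h
    rw [abs_sub_comm, abs_of_nonneg this.1, abs_sub_comm, abs_of_nonneg (sub_nonneg.2 h)]
    exact this.2
  · have := hC.sub_left_mem_Icc hx' hx hy h
    rw [abs_of_nonneg this.1, abs_of_nonneg (sub_nonneg.2 h)]
    exact this.2

lemma abs_sub_le_right (hx : x ∈ Icc (0:ℝ) 1) (hy : y ∈ Icc (0:ℝ) 1)
    (hy' : y' ∈ Icc (0:ℝ) 1) : |C x y - C x y'| ≤ |y - y'| := by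
  rcases le_total y y' with h | h
  · have := hC.sub_right_mem_Icc hx hy hy' h
    rw [abs_sub_comm, abs_of_nonneg this.1, abs_sub_comm, abs_of_nonneg (sub_nonneg.2 h)]
    exact this.2
  · have := hC.sub_right_mem_Icc hx hy' hy h
    rw [abs_of_nonneg this.1, abs_of_nonneg (sub_nonneg.2 h)]
    exact this.2

lemma abs_sub_le (hx : x ∈ Icc (0:ℝ) 1) (hx' : x' ∈ Icc (0:ℝ) 1)
    (hy : y ∈ Icc (0:ℝ) 1) (hy' : y' ∈ Icc (0:ℝ) 1) :
    |C x y - C x' y'| ≤ |x - x'| + |y - y'| :=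
  (_root_.abs_sub_le _ (C x' y) _).trans
    (add_le_add (hC.abs_sub_le_left hx hx' hy) (hC.abs_sub_le_right hx' hy hy'))

end IsCopula

lemma eventually_mul_mem_unitInterval {u : ℝ} (hu : 0 ≤ u) :
    ∀ᶠ p in 𝓝[>] (0:ℝ), p * u ∈ Icc (0:ℝ) 1 := by
  have hlim : Tendsto (fun p : ℝ => p * u) (𝓝[>] 0) (𝓝 0) := by
    simpa using ((continuous_mul_const u).tendsto 0).mono_left nhdsWithin_le_nhds
  filter_upwards [self_mem_nhdsWithin, hlim.eventually (ge_mem_nhds one_pos)] with p hp hp1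
  exact ⟨mul_nonneg (le_of_lt hp) hu, hp1⟩

namespace HasTDF

variable {C Λ : ℝ → ℝ → ℝ} (hT : HasTDF C Λ)
include hT

lemma homogeneous {s u v : ℝ} (hs : 0 < s) (hu : 0 ≤ u) (hv : 0 ≤ v) :
    Λ (s * u) (s * v) = s * Λ u v := by
  have hmul : Tendsto (fun p : ℝ => p * s) (𝓝[>] 0) (𝓝[>] 0) := by
    simpa using Filter.TendstoNhdsWithinIoi.mul_const (b := s) (c := 0) hs tendsto_id
  refine tendsto_nhds_unique (hT _ _ (by positivity) (by positivity)) ?_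
  refine (((hT u v hu hv).comp hmul).const_mul s).congr' ?_
  filter_upwards [self_mem_nhdsWithin] with p (hp : 0 < p)
  simp only [Function.comp_apply, ← mul_assoc]
  field_simp

lemma abs_sub_le (hC : IsCopula C) {u v u' v' : ℝ} (hu : 0 ≤ u) (hv : 0 ≤ v)
    (hu' : 0 ≤ u') (hv' : 0 ≤ v') :
    |Λ u v - Λ u' v'| ≤ |u - u'| + |v - v'| := by
  refine le_of_tendsto (((hT u v hu hv).sub (hT u' v' hu' hv')).abs) ?_
  filter_upwards [self_mem_nhdsWithin, eventually_mul_mem_unitInterval hu,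
    eventually_mul_mem_unitInterval hv, eventually_mul_mem_unitInterval hu',
    eventually_mul_mem_unitInterval hv'] with p (hp : 0 < p) h₁ h₂ h₁' h₂'
  rw [div_sub_div_same, abs_div, abs_of_pos hp, div_le_iff₀ hp]
  calc |C (p * u) (p * v) - C (p * u') (p * v')|
      ≤ |p * u - p * u'| + |p * v - p * v'| := hC.abs_sub_le h₁ h₁' h₂ h₂'
    _ = (|u - u'| + |v - v'|) * p := by
      rw [← mul_sub, ← mul_sub, abs_mul, abs_mul, abs_of_pos hp]; ring

lemma continuousOn (hC : IsCopula C) :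
    ContinuousOn (fun q : ℝ × ℝ => Λ q.1 q.2) (Ici 0 ×ˢ Ici 0) := by
  refine LipschitzOnWith.continuousOn (K := 2) ?_
  refine LipschitzOnWith.of_dist_le_mul fun q hq r hr => ?_
  rw [Real.dist_eq, Prod.dist_eq, Real.dist_eq, Real.dist_eq]
  have := hT.abs_sub_le hC hq.1 hq.2 hr.1 hr.2
  push_cast
  linarith [le_max_left |q.1 - r.1| |q.2 - r.2|, le_max_right |q.1 - r.1| |q.2 - r.2|]

end HasTDF

lemma MeasureTheory.Measure.prod_diagonal_eq_zero {α : Type*} [MeasurableSpace α]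
    [MeasurableEq α] (μ ν : Measure α) [SFinite ν] [NullSingletonClass ν] :
    μ.prod ν (diagonal α) = 0 := by
  have hslice : ∀ x : α, Prod.mk x ⁻¹' diagonal α = {x} := fun x => by
    ext y; simp [eq_comm]
  simp [Measure.prod_apply measurableSet_diagonal, hslice]

lemma integral_prod_self_eq_add_swap {E : Type*} [NormedAddCommGroup E] [NormedSpace ℝ E]
    (μ : Measure ℝ) [SFinite μ] [NullSingletonClass μ] {f : ℝ × ℝ → E}
    (hf : Integrable f (μ.prod μ)) :
    ∫ q, f q ∂μ.prod μ = ∫ q, {q | q.2 < q.1}.indicator f q ∂μ.prod μ +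
      ∫ q, {q | q.2 < q.1}.indicator (f ∘ Prod.swap) q ∂μ.prod μ := by
  have hlt : MeasurableSet {q : ℝ × ℝ | q.2 < q.1} :=
    measurableSet_lt measurable_snd measurable_fst
  have hgt : MeasurableSet {q : ℝ × ℝ | q.1 < q.2} :=
    measurableSet_lt measurable_fst measurable_snd
  have hswap : ∫ q, {q | q.2 < q.1}.indicator (f ∘ Prod.swap) q ∂μ.prod μ
      = ∫ q, {q | q.1 < q.2}.indicator f q ∂μ.prod μ := by
    rw [← integral_prod_swap]
    congr 1 with q
  have hoff : ∀ᵐ q ∂μ.prod μ, q.1 ≠ q.2 :=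
    measure_mono_null (fun q hq => not_not.1 hq) (Measure.prod_diagonal_eq_zero μ μ)
  rw [hswap, ← integral_add (hf.indicator hlt) (hf.indicator hgt)]
  refine integral_congr_ae ?_
  filter_upwards [hoff] with q hq
  rcases hq.lt_or_gt with h | h <;> simp [h, h.not_gt]

lemma setIntegral_Icc_indicator_lt {E : Type*} [NormedAddCommGroup E] [NormedSpace ℝ E]
    (F : ℝ × ℝ → E) {u : ℝ} (hu : u ∈ Icc (0:ℝ) 1) :
    ∫ v in Icc (0:ℝ) 1, {q : ℝ × ℝ | q.2 < q.1}.indicator F (u, v)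
      = ∫ v in (0:ℝ)..u, F (u, v) := by
  have hslice : (fun v => {q : ℝ × ℝ | q.2 < q.1}.indicator F (u, v))
      = (Iio u).indicator (fun v => F (u, v)) := by
    ext v; simp [indicator_apply]
  have hset : Icc (0:ℝ) 1 ∩ Iio u = Ico 0 u := by
    ext v; simp only [mem_inter_iff, mem_Icc, mem_Iio, mem_Ico]
    constructor
    · rintro ⟨⟨h₀, -⟩, h⟩; exact ⟨h₀, h⟩
    · rintro ⟨h₀, h⟩; exact ⟨⟨h₀, h.le.trans hu.2⟩, h⟩
  rw [hslice, setIntegral_indicator measurableSet_Iio, hset, integral_Ico_eq_integral_Ioo,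
    intervalIntegral.integral_of_le hu.1, integral_Ioc_eq_integral_Ioo]

local notation "μI" => Measure.restrict (volume : Measure ℝ) (Icc (0:ℝ) 1)
local notation "μ□" => Measure.prod μI μI

lemma ae_mem_unitSquare : ∀ᵐ q ∂μ□, q ∈ Icc (0:ℝ) 1 ×ˢ Icc (0:ℝ) 1 := by
  rw [Measure.prod_restrict]
  exact ae_restrict_mem (measurableSet_Icc.prod measurableSet_Icc)

lemma intervalIntegral_rpow_zero_one {r : ℝ} (hr : -1 < r) :
    ∫ t in (0:ℝ)..1, t ^ r = 1 / (r + 1) := by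
  simp [integral_rpow (Or.inl hr), Real.zero_rpow (by linarith : r + 1 ≠ 0)]

lemma setIntegral_Icc_rpow {r : ℝ} (hr : -1 < r) :
    ∫ t in Icc (0:ℝ) 1, t ^ r = 1 / (r + 1) := by
  rw [integral_Icc_eq_integral_Ioc, ← intervalIntegral.integral_of_le zero_le_one,
    intervalIntegral_rpow_zero_one hr]

lemma integrableOn_Icc_rpow {r : ℝ} (hr : -1 < r) :
    IntegrableOn (fun t : ℝ => t ^ r) (Icc 0 1) :=
  (intervalIntegrable_iff_integrableOn_Icc_of_le zero_le_one).1
    (intervalIntegral.intervalIntegrable_rpow' hr)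

noncomputable def polyDensity (m₁ m₂ : ℝ) (q : ℝ × ℝ) : ℝ :=
  m₁ * m₂ * q.1 ^ (m₁ - 1) * q.2 ^ (m₂ - 1)

lemma polyMeasure_eq_withDensity (m₁ m₂ : ℝ) :
    polyMeasure m₁ m₂ = μ□.withDensity fun q => ENNReal.ofReal (polyDensity m₁ m₂ q) :=
  rfl

lemma polyDensity_swap (m₁ m₂ : ℝ) (q : ℝ × ℝ) :
    polyDensity m₁ m₂ q.swap = polyDensity m₂ m₁ q := by
  simp only [polyDensity, Prod.fst_swap, Prod.snd_swap]; ring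

lemma polyDensity_eq_mul (m₁ m₂ : ℝ) (q : ℝ × ℝ) :
    polyDensity m₁ m₂ q = (m₁ * q.1 ^ (m₁ - 1)) * (m₂ * q.2 ^ (m₂ - 1)) := by
  simp only [polyDensity]; ring

lemma integrable_polyDensity {m₁ m₂ : ℝ} (hm₁ : 0 < m₁) (hm₂ : 0 < m₂) :
    Integrable (polyDensity m₁ m₂) μ□ := by
  simp_rw [funext (polyDensity_eq_mul m₁ m₂)]
  exact ((integrableOn_Icc_rpow (by linarith)).const_mul m₁).mul_prod
    ((integrableOn_Icc_rpow (by linarith)).const_mul m₂)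

lemma integral_polyDensity {m₁ m₂ : ℝ} (hm₁ : 0 < m₁) (hm₂ : 0 < m₂) :
    ∫ q, polyDensity m₁ m₂ q ∂μ□ = 1 := by
  simp_rw [polyDensity_eq_mul, integral_prod_mul (fun t => m₁ * t ^ (m₁ - 1))
    (fun t => m₂ * t ^ (m₂ - 1)), integral_const_mul,
    setIntegral_Icc_rpow (by linarith : -1 < m₁ - 1),
    setIntegral_Icc_rpow (by linarith : -1 < m₂ - 1), sub_add_cancel]
  field_simp

lemma polyDensity_nonneg_ae {m₁ m₂ : ℝ} (hm₁ : 0 ≤ m₁) (hm₂ : 0 ≤ m₂) :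
    0 ≤ᵐ[μ□] polyDensity m₁ m₂ := by
  filter_upwards [ae_mem_unitSquare] with q ⟨hq₁, hq₂⟩
  have := Real.rpow_nonneg hq₁.1 (m₁ - 1)
  have := Real.rpow_nonneg hq₂.1 (m₂ - 1)
  exact mul_nonneg (mul_nonneg (mul_nonneg hm₁ hm₂) ‹_›) ‹_›

lemma integral_polyMeasure {E : Type*} [NormedAddCommGroup E] [NormedSpace ℝ E]
    {m₁ m₂ : ℝ} (hm₁ : 0 ≤ m₁) (hm₂ : 0 ≤ m₂) (f : ℝ × ℝ → E) :
    ∫ q, f q ∂polyMeasure m₁ m₂ = ∫ q, polyDensity m₁ m₂ q • f q ∂μ□ := by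
  rw [polyMeasure_eq_withDensity, integral_withDensity_eq_integral_toReal_smul
    (by unfold polyDensity; fun_prop) (ae_of_all _ fun _ => ENNReal.ofReal_lt_top)]
  refine integral_congr_ae ?_
  filter_upwards [polyDensity_nonneg_ae hm₁ hm₂] with q hq
  rw [ENNReal.toReal_ofReal hq]

lemma isProbabilityMeasure_polyMeasure {m₁ m₂ : ℝ} (hm₁ : 0 < m₁) (hm₂ : 0 < m₂) :
    IsProbabilityMeasure (polyMeasure m₁ m₂) := by
  constructor
  rw [polyMeasure_eq_withDensity, withDensity_apply _ MeasurableSet.univ, Measure.restrict_univ,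
    ← ofReal_integral_eq_lintegral_ofReal (integrable_polyDensity hm₁ hm₂)
    (polyDensity_nonneg_ae hm₁.le hm₂.le), integral_polyDensity hm₁ hm₂, ENNReal.ofReal_one]

lemma polyMeasure_absolutelyContinuous (m₁ m₂ : ℝ) : polyMeasure m₁ m₂ ≪ μ□ :=
  polyMeasure_eq_withDensity m₁ m₂ ▸ withDensity_absolutelyContinuous _ _

lemma prod_axes_eq_zero : μ□ {q : ℝ × ℝ | q.1 = 0 ∨ q.2 = 0} = 0 := by
  have haxes : {q : ℝ × ℝ | q.1 = 0 ∨ q.2 = 0} = {0} ×ˢ univ ∪ univ ×ˢ {0} := by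
    ext q; simp
  rw [haxes]
  exact measure_union_null (by simp [Measure.prod_prod]) (by simp [Measure.prod_prod])

lemma isTailGenMeasure_polyMeasure {m₁ m₂ : ℝ} (hm₁ : 0 < m₁) (hm₂ : 0 < m₂) :
    IsTailGenMeasure (polyMeasure m₁ m₂) :=
  ⟨isProbabilityMeasure_polyMeasure hm₁ hm₂,
    polyMeasure_absolutelyContinuous m₁ m₂ ae_mem_unitSquare,
    (polyMeasure_absolutelyContinuous m₁ m₂ prod_axes_eq_zero).trans_lt zero_lt_one⟩

section HomogeneousKernel

variable {K : ℝ → ℝ → ℝ}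

lemma intervalIntegral_homogeneous_mul_rpow
    (hK : ∀ s u v, 0 < s → 0 ≤ u → 0 ≤ v → K (s * u) (s * v) = s * K u v)
    {u : ℝ} (hu : 0 < u) (n : ℝ) :
    ∫ v in (0:ℝ)..u, K u v * v ^ (n - 1)
      = u ^ (n + 1) * ∫ t in (0:ℝ)..1, K 1 t * t ^ (n - 1) := by
  have hsub := intervalIntegral.smul_integral_comp_mul_left (a := 0) (b := 1)
    (fun v => K u v * v ^ (n - 1)) u
  rw [mul_zero, mul_one] at hsub
  have hpow : u ^ (n + 1) = u * u * u ^ (n - 1) := by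
    rw [show n + 1 = n - 1 + 1 + 1 by ring, Real.rpow_add_one hu.ne', Real.rpow_add_one hu.ne']
    ring
  have hscaled : ∫ t in (0:ℝ)..1, K u (u * t) * (u * t) ^ (n - 1)
      = u * u ^ (n - 1) * ∫ t in (0:ℝ)..1, K 1 t * t ^ (n - 1) := by
    rw [← intervalIntegral.integral_const_mul]
    refine intervalIntegral.integral_congr fun t ht => ?_
    rw [uIcc_of_le zero_le_one] at ht
    have hhom : K u (u * t) = u * K 1 t := by simpa using hK u 1 t hu zero_le_one ht.1
    simp only [hhom, Real.mul_rpow hu.le ht.1]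
    ring
  rw [← hsub, smul_eq_mul, hscaled, hpow]
  ring

variable (hKc : ContinuousOn (fun q : ℝ × ℝ => K q.1 q.2) (Icc 0 1 ×ˢ Icc 0 1))
include hKc

lemma integrable_polyDensity_mul {m n : ℝ} (hm : 0 < m) (hn : 0 < n) :
    Integrable (fun q => polyDensity m n q * K q.1 q.2) μ□ := by
  obtain ⟨c, hc⟩ := (isCompact_Icc.prod isCompact_Icc).exists_bound_of_continuousOn hKc
  refine (integrable_polyDensity hm hn).mul_bdd (c := c) ?_ ?_
  · rw [Measure.prod_restrict]
    exact hKc.aestronglyMeasurable (measurableSet_Icc.prod measurableSet_Icc)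
  · filter_upwards [ae_mem_unitSquare] with q hq using hc q hq

lemma intervalIntegrable_mul_rpow {n : ℝ} (hn : 0 < n) :
    IntervalIntegrable (fun t => K 1 t * t ^ (n - 1)) volume 0 1 := by
  refine (intervalIntegral.intervalIntegrable_rpow' (by linarith)).continuousOn_mul
    (hKc.comp (f := fun t => ((1:ℝ), t)) (by fun_prop)
      fun t ht => ⟨right_mem_Icc.2 zero_le_one, ?_⟩)
  rwa [uIcc_of_le zero_le_one] at ht

variable (hK : ∀ s u v, 0 < s → 0 ≤ u → 0 ≤ v → K (s * u) (s * v) = s * K u v)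
include hK

lemma integral_indicator_lt_polyDensity_mul {m n : ℝ} (hm : 0 < m) (hn : 0 < n) :
    ∫ q, {q : ℝ × ℝ | q.2 < q.1}.indicator
        (fun q => polyDensity m n q * K q.1 q.2) q ∂μ□
      = m * n / (m + n + 1) * ∫ t in (0:ℝ)..1, K 1 t * t ^ (n - 1) := by
  set B := ∫ t in (0:ℝ)..1, K 1 t * t ^ (n - 1)
  have hlt : MeasurableSet {q : ℝ × ℝ | q.2 < q.1} :=
    measurableSet_lt measurable_snd measurable_fst
  have hpos : ∀ᵐ u ∂μI, u ∈ Ioc (0:ℝ) 1 := by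
    rw [Measure.restrict_congr_set Ioc_ae_eq_Icc.symm]
    exact ae_restrict_mem measurableSet_Ioc
  have hinner : ∀ᵐ u ∂μI, ∫ v, {q : ℝ × ℝ | q.2 < q.1}.indicator
      (fun q => polyDensity m n q * K q.1 q.2) (u, v) ∂μI = m * n * B * u ^ (m + n) := by
    filter_upwards [hpos] with u ⟨hu₀, hu₁⟩
    rw [setIntegral_Icc_indicator_lt _ ⟨hu₀.le, hu₁⟩]
    calc ∫ v in (0:ℝ)..u, polyDensity m n (u, v) * K u v
        = m * n * u ^ (m - 1) * ∫ v in (0:ℝ)..u, K u v * v ^ (n - 1) := by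
          rw [← intervalIntegral.integral_const_mul]
          congr 1 with v
          simp only [polyDensity]
          ring
      _ = m * n * u ^ (m - 1) * (u ^ (n + 1) * B) := by
          rw [intervalIntegral_homogeneous_mul_rpow hK hu₀]
      _ = m * n * B * u ^ (m + n) := by
          rw [show m + n = m - 1 + (n + 1) by ring, Real.rpow_add hu₀ (m - 1) (n + 1)]
          ring
  rw [integral_prod _ ((integrable_polyDensity_mul hKc hm hn).indicator hlt),
    integral_congr_ae hinner, integral_const_mul, setIntegral_Icc_rpow (by linarith)]
  ring

lemma integral_polyMeasure_of_homogeneous {m₁ m₂ : ℝ} (hm₁ : 0 < m₁) (hm₂ : 0 < m₂) :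
    ∫ q, K q.1 q.2 ∂polyMeasure m₁ m₂
      = m₁ * m₂ / (m₁ + m₂ + 1) *
          ∫ t in (0:ℝ)..1, (K t 1 * t ^ (m₁ - 1) + K 1 t * t ^ (m₂ - 1)) := by
  have hKc' : ContinuousOn (fun q : ℝ × ℝ => Function.swap K q.1 q.2) (Icc 0 1 ×ˢ Icc 0 1) :=
    hKc.comp continuous_swap.continuousOn fun q hq => ⟨hq.2, hq.1⟩
  have hK' : ∀ s u v, 0 < s → 0 ≤ u → 0 ≤ v →
      Function.swap K (s * u) (s * v) = s * Function.swap K u v :=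
    fun s u v hs hu hv => hK s v u hs hv hu
  have hswap : (fun q => polyDensity m₁ m₂ q * K q.1 q.2) ∘ Prod.swap
      = fun q => polyDensity m₂ m₁ q * Function.swap K q.1 q.2 := by
    funext q
    simp [polyDensity_swap, Function.swap]
  simp_rw [integral_polyMeasure hm₁.le hm₂.le, smul_eq_mul]
  rw [integral_prod_self_eq_add_swap μI (integrable_polyDensity_mul hKc hm₁ hm₂), hswap,
    integral_indicator_lt_polyDensity_mul hKc hK hm₁ hm₂,
    integral_indicator_lt_polyDensity_mul hKc' hK' hm₂ hm₁,
    intervalIntegral.integral_add (intervalIntegrable_mul_rpow hKc' hm₁)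
      (intervalIntegrable_mul_rpow hKc hm₂)]
  simp only [Function.swap]
  ring

end HomogeneousKernel

lemma integral_polyMeasure_min {m₁ m₂ : ℝ} (hm₁ : 0 < m₁) (hm₂ : 0 < m₂) :
    ∫ q : ℝ × ℝ, min q.1 q.2 ∂polyMeasure m₁ m₂
      = m₁ * m₂ / (m₁ + m₂ + 1) * (1 / (m₁ + 1) + 1 / (m₂ + 1)) := by
  rw [integral_polyMeasure_of_homogeneous (K := min)
    (continuous_fst.min continuous_snd).continuousOn
    (fun s u v hs _ _ => (mul_min_of_nonneg u v hs.le).symm) hm₁ hm₂]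
  have hpow : ∀ {m t : ℝ}, 0 < m → 0 ≤ t → t * t ^ (m - 1) = t ^ m := fun hm ht => by
    rw [← Real.rpow_one_add' ht (by linarith), add_sub_cancel]
  have hmin : EqOn (fun t : ℝ => min t 1 * t ^ (m₁ - 1) + min 1 t * t ^ (m₂ - 1))
      (fun t => t ^ m₁ + t ^ m₂) (uIcc 0 1) := fun t ht => by
    rw [uIcc_of_le zero_le_one] at ht
    simp only [min_eq_left ht.2, min_eq_right ht.2, hpow hm₁ ht.1, hpow hm₂ ht.1]
  rw [intervalIntegral.integral_congr hmin, intervalIntegral.integral_add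
    (intervalIntegral.intervalIntegrable_rpow' (by linarith))
    (intervalIntegral.intervalIntegrable_rpow' (by linarith)),
    intervalIntegral_rpow_zero_one (by linarith), intervalIntegral_rpow_zero_one (by linarith)]

lemma tdm_polyMeasure {C Λ : ℝ → ℝ → ℝ} (hC : IsCopula C) (hT : HasTDF C Λ)
    {m₁ m₂ : ℝ} (hm₁ : 0 < m₁) (hm₂ : 0 < m₂) :
    tdm Λ (polyMeasure m₁ m₂) = (m₁ + 1) * (m₂ + 1) / (m₁ + m₂ + 2) *
      ∫ t in (0:ℝ)..1, (Λ t 1 * t ^ (m₁ - 1) + Λ 1 t * t ^ (m₂ - 1)) := by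
  rw [tdm, integral_polyMeasure_of_homogeneous
    ((hT.continuousOn hC).mono fun q hq => ⟨hq.1.1, hq.2.1⟩)
    (fun _ _ _ => hT.homogeneous) hm₁ hm₂, integral_polyMeasure_min hm₁ hm₂]
  field_simp
  ring

theorem tdm_polynomially_weighted (m₁ m₂ : ℝ) (hm₁ : 0 < m₁) (hm₂ : 0 < m₂) :
    IsTailGenMeasure (polyMeasure m₁ m₂) ∧
    (∀ C Λ : ℝ → ℝ → ℝ, IsCopula C → HasTDF C Λ →
      tdm Λ (polyMeasure m₁ m₂)
        = ((m₁ + 1) * (m₂ + 1) / (m₁ + m₂ + 2)) *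
            ∫ t in (0:ℝ)..1, (Λ t 1 * t ^ (m₁ - 1) + Λ 1 t * t ^ (m₂ - 1))) ∧
    (∀ C Λ : ℝ → ℝ → ℝ, IsCopula C → HasTDF C Λ →
      tdm Λ (polyMeasure 1 1) = ∫ t in (0:ℝ)..1, (Λ t 1 + Λ 1 t)) := by
  refine ⟨isTailGenMeasure_polyMeasure hm₁ hm₂,
    fun C Λ hC hT => tdm_polyMeasure hC hT hm₁ hm₂, fun C Λ hC hT => ?_⟩
  rw [tdm_polyMeasure hC hT one_pos one_pos]
  norm_num
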